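/- arXiv:1310.0416 — 6 statements merged into one kernel-verified Lean document; each statement's English description precedes it below -/
import Mathlib

section
/- Let K be a field. The following are equivalent: (1) K is isomorphic to the field with two elements 𝔽₂; (2) for every positive integer n the matrix ring Mₙ(K) is nil-clean; (3) there exists a positive integer n such that the matrix ring Mₙ(K) is nil-clean. -/
/-!
Over `𝔽₂` every endomorphism `f` of a finite-dimensional space `V` is nil-clean, by induction on
`dim V`. If `f` leaves a subspace `0 ≠ W ≠ V` invariant, nil-clean decompositions of `f` on `W`
and on `V ⧸ W` glue, through a complement of `W`, to an idempotent `e` such that `f - e` is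
nilpotent on `W` and on `V ⧸ W`, hence nilpotent. Otherwise `f` has a cyclic vector, so in a
suitable basis it is a companion matrix; subtracting a rank-one idempotent when its trace is `1`,
or a rank-two idempotent when its trace is `0 = 2`, leaves a nilpotent with a cyclic vector
(dimensions `≤ 2` are checked by hand).

Conversely, if the scalar matrix `a • 1` is `e + n`, then `e` and `n` commute and
`a² - a = n (2e + n - 1)` is nilpotent, hence zero: every element of `K` is idempotent, which
forces `K ≅ 𝔽₂`.
-/

/-- An element of a ring is nil-clean if it is the sum of an idempotent and a nilpotent. -/
def IsNilCleanRing (R : Type*) [Ring R] : Prop :=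
  ∀ a : R, ∃ e n : R, IsIdempotentElem e ∧ IsNilpotent n ∧ a = e + n

def IsNilClean {R : Type*} [Ring R] (a : R) : Prop :=
  ∃ e n : R, IsIdempotentElem e ∧ IsNilpotent n ∧ a = e + n

section NilClean

variable {R S : Type*} [Ring R] [Ring S]

theorem IsNilpotent.isNilClean {n : R} (hn : IsNilpotent n) : IsNilClean n :=
  ⟨0, n, IsIdempotentElem.zero, hn, (zero_add n).symm⟩

theorem IsNilClean.map {F : Type*} [FunLike F R S] [RingHomClass F R S] (φ : F) {a : R}
    (ha : IsNilClean a) : IsNilClean (φ a) := by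
  obtain ⟨e, n, he, hn, rfl⟩ := ha
  exact ⟨φ e, φ n, he.map φ, hn.map φ, map_add φ e n⟩

theorem IsNilCleanRing.of_surjective {F : Type*} [FunLike F R S] [RingHomClass F R S] (φ : F)
    (hφ : Function.Surjective φ) (h : IsNilCleanRing R) : IsNilCleanRing S := by
  intro b
  obtain ⟨a, rfl⟩ := hφ b
  exact IsNilClean.map φ (h a)

theorem IsNilClean.isNilpotent_mul_self_sub {a : R} (ha : IsNilClean a)
    (hcomm : ∀ x, Commute a x) : IsNilpotent (a * a - a) := by
  obtain ⟨e, n, he, hn, rfl⟩ := ha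
  have hen : Commute e n := by simpa using (hcomm n).sub_left (Commute.refl n)
  have key : (e + n) * (e + n) - (e + n) = n * (e + e + n - 1) := by
    calc (e + n) * (e + n) - (e + n) = (e * e - e) + (e * n + n * e) + n * n - n := by
          noncomm_ring
      _ = n * (e + e + n - 1) := by rw [he.eq, hen.eq]; noncomm_ring
  rw [key]
  exact (((hen.symm.add_right hen.symm).add_right (Commute.refl n)).sub_right
    (Commute.one_right n)).isNilpotent_mul_right hn

end NilClean

namespace Module.End

section Reduction

variable {R M : Type*} [Ring R] [AddCommGroup M] [Module R M]

theorem isNilpotent_of_isNilpotent_restrict_of_isNilpotent_mapQ {g : End R M}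
    {W : Submodule R M} (hW : W ≤ W.comap g) (h₁ : IsNilpotent (g.restrict hW))
    (h₂ : IsNilpotent (W.mapQ W g hW)) : IsNilpotent g := by
  obtain ⟨l, hl⟩ := h₁
  obtain ⟨k, hk⟩ := h₂
  have hkW : ∀ x, (g ^ k) x ∈ W := fun x => by
    rw [← W.mapQ_pow hW k] at hk
    simpa [Submodule.Quotient.mk_eq_zero] using LinearMap.congr_fun hk (W.mkQ x)
  have hlW : ∀ w ∈ W, (g ^ l) w = 0 := fun w hw => by
    rw [pow_restrict] at hl
    simpa using congr_arg Subtype.val (LinearMap.congr_fun hl ⟨w, hw⟩)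
  exact ⟨l + k, LinearMap.ext fun x => by
    rw [pow_add, mul_apply, hlW _ (hkW x), LinearMap.zero_apply]⟩

theorem exists_isIdempotentElem_restrict_eq_mapQ_eq {W q : Submodule R M} (hq : IsCompl W q)
    {e₁ : End R W} {e₂ : End R (M ⧸ W)} (he₁ : IsIdempotentElem e₁)
    (he₂ : IsIdempotentElem e₂) :
    ∃ (e : End R M) (hW : W ≤ W.comap e),
      IsIdempotentElem e ∧ e.restrict hW = e₁ ∧ W.mapQ W e hW = e₂ := by
  set π := W.projectionOnto q hq
  set s := q.subtype ∘ₗ (W.quotientEquivOfIsCompl q hq : (M ⧸ W) →ₗ[R] q)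
  have hπW : ∀ w : W, π w = w := Submodule.projectionOnto_apply_left hq
  have hπs : ∀ y, π (s y) = 0 := fun y => Submodule.projectionOnto_apply_right hq _
  have hmkW : ∀ w : W, W.mkQ w = 0 := fun w => (Submodule.Quotient.mk_eq_zero W).2 w.2
  have hmks : ∀ y, W.mkQ (s y) = y := Submodule.mk_quotientEquivOfIsCompl_apply hq
  let e : End R M := W.subtype ∘ₗ e₁ ∘ₗ π + s ∘ₗ e₂ ∘ₗ W.mkQ
  have he : ∀ x, e x = (e₁ (π x) : M) + s (e₂ (W.mkQ x)) := fun x => rfl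
  have heW : ∀ w : W, e w = e₁ w := fun w => by rw [he, hπW, hmkW, map_zero, map_zero, add_zero]
  have hWe : ∀ x, W.mkQ (e x) = e₂ (W.mkQ x) := fun x => by rw [he, map_add, hmkW, hmks, zero_add]
  have hπe : ∀ x, π (e x) = e₁ (π x) := fun x => by rw [he, map_add, hπW, hπs, add_zero]
  have hW : W ≤ W.comap e := fun x hx => show e x ∈ W from heW ⟨x, hx⟩ ▸ (e₁ ⟨x, hx⟩).2
  refine ⟨e, hW, ?_, LinearMap.ext fun w => Subtype.ext (heW w), ?_⟩
  · refine LinearMap.ext fun x => ?_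
    rw [mul_apply, he (e x), hπe, hWe, ← mul_apply e₁, ← mul_apply e₂, he₁.eq, he₂.eq, he]
  · refine Submodule.linearMap_qext W (LinearMap.ext fun x => ?_)
    simpa using hWe x

theorem isNilClean_of_isNilClean_restrict_of_isNilClean_mapQ {K V : Type*} [DivisionRing K]
    [AddCommGroup V] [Module K V] {f : End K V} {W : Submodule K V} (hW : W ≤ W.comap f)
    (h₁ : IsNilClean (f.restrict hW)) (h₂ : IsNilClean (W.mapQ W f hW)) : IsNilClean f := by
  obtain ⟨e₁, n₁, he₁, hn₁, hf₁⟩ := h₁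
  obtain ⟨e₂, n₂, he₂, hn₂, hf₂⟩ := h₂
  obtain ⟨q, hq⟩ := W.exists_isCompl
  obtain ⟨e, heW, he, hre, hqe⟩ := exists_isIdempotentElem_restrict_eq_mapQ_eq hq he₁ he₂
  have hW' : W ≤ W.comap (f - e) := fun x hx => W.sub_mem (hW hx) (heW hx)
  refine ⟨e, f - e, he, isNilpotent_of_isNilpotent_restrict_of_isNilpotent_mapQ hW' ?_ ?_,
    (add_sub_cancel e f).symm⟩
  · rwa [← LinearMap.restrict_sub hW heW, hf₁, hre, add_sub_cancel_left]
  · have hmapQ : W.mapQ W (f - e) hW' = W.mapQ W f hW - W.mapQ W e heW := by ext; simp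
    rwa [hmapQ, hf₂, hqe, add_sub_cancel_left]

end Reduction

section Cyclic

variable {R M : Type*} [Ring R] [AddCommGroup M] [Module R M]

def IsCyclicVector (f : End R M) (v : M) : Prop :=
  Submodule.span R (Set.range fun i : ℕ => (f ^ i) v) = ⊤

theorem IsCyclicVector.eq_zero_of_commute {f g : End R M} {v : M} (hv : f.IsCyclicVector v)
    (hfg : Commute f g) (hg : g v = 0) : g = 0 :=
  LinearMap.ext_on_range hv fun i => by
    rw [← mul_apply, ← (hfg.pow_left i).eq, mul_apply, hg, map_zero, LinearMap.zero_apply]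

theorem IsCyclicVector.isNilpotent {f : End R M} {v : M} (hv : f.IsCyclicVector v) {k : ℕ}
    (hk : (f ^ k) v = 0) : IsNilpotent f :=
  ⟨k, hv.eq_zero_of_commute (Commute.self_pow f k) hk⟩

theorem exists_isCyclicVector_of_invariant_eq_bot_or_top {f : End R M}
    (hf : ∀ W : Submodule R M, W ≤ W.comap f → W = ⊥ ∨ W = ⊤) : ∃ v, f.IsCyclicVector v := by
  rcases subsingleton_or_nontrivial M with hM | hM
  · exact ⟨0, Subsingleton.elim _ _⟩
  obtain ⟨v, hv⟩ := exists_ne (0 : M)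
  refine ⟨v, (hf _ ?_).resolve_left fun h => hv ?_⟩
  · rw [Submodule.span_le]
    rintro _ ⟨i, rfl⟩
    exact Submodule.subset_span
      ⟨i + 1, show (f ^ (i + 1)) v = f ((f ^ i) v) by rw [pow_succ', mul_apply]⟩
  · have hv_mem : v ∈ Submodule.span R (Set.range fun i : ℕ => (f ^ i) v) :=
      Submodule.subset_span ⟨0, show (f ^ 0) v = v by rw [pow_zero, one_apply]⟩
    rwa [h, Submodule.mem_bot] at hv_mem

theorem pow_apply_eq_of_apply_pow_apply_eq {f g : End R M} {v : M} {k : ℕ}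
    (h : ∀ i < k, g ((f ^ i) v) = (f ^ (i + 1)) v) : ∀ i ≤ k, (g ^ i) v = (f ^ i) v
  | 0, _ => by rw [pow_zero, pow_zero]
  | i + 1, hi => by
    rw [pow_succ', mul_apply, pow_apply_eq_of_apply_pow_apply_eq h i (by omega), h i (by omega)]

theorem isCyclicVector_of_basis_mem_span {ι : Type*} {g : End R M} {v : M} (b : Basis ι R M)
    (hb : ∀ i, b i ∈ Submodule.span R (Set.range fun k : ℕ => (g ^ k) v)) :
    g.IsCyclicVector v := by
  rw [IsCyclicVector, eq_top_iff, ← b.span_eq, Submodule.span_le]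
  rintro _ ⟨i, rfl⟩
  exact hb i

end Cyclic

section CyclicBasis

variable {R M : Type*} [CommRing R] [Nontrivial R] [AddCommGroup M] [Module R M]
  [Module.Free R M] [Module.Finite R M]

open Polynomial in
theorem IsCyclicVector.span_pow_apply_lt_finrank_eq_top {f : End R M} {v : M}
    (hv : f.IsCyclicVector v) :
    Submodule.span R (Set.range fun i : Fin (finrank R M) => (f ^ (i : ℕ)) v) = ⊤ := by
  refine eq_top_iff.2 (hv ▸ Submodule.span_le.2 ?_)
  rintro _ ⟨k, rfl⟩
  beta_reduce
  have hdeg : (X ^ k %ₘ f.charpoly).degree < finrank R M := by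
    rw [← LinearMap.charpoly_natDegree f, ← degree_eq_natDegree f.charpoly_monic.ne_zero]
    exact degree_modByMonic_lt _ f.charpoly_monic
  rw [LinearMap.pow_eq_aeval_mod_charpoly, aeval_eq_sum_range, LinearMap.sum_apply]
  refine Submodule.sum_mem _ fun i _ => ?_
  by_cases hi : i < finrank R M
  · exact Submodule.smul_mem _ _ (Submodule.subset_span ⟨⟨i, hi⟩, rfl⟩)
  · rw [coeff_eq_zero_of_degree_lt (hdeg.trans_le (by exact_mod_cast not_lt.1 hi)), zero_smul,
      LinearMap.zero_apply]
    exact zero_mem _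

theorem IsCyclicVector.exists_basis {f : End R M} {v : M} (hv : f.IsCyclicVector v) {n : ℕ}
    (hn : finrank R M = n) : ∃ b : Basis (Fin n) R M, ∀ i, b i = (f ^ (i : ℕ)) v := by
  subst hn
  exact ⟨basisOfTopLeSpanOfCardEqFinrank _ hv.span_pow_apply_lt_finrank_eq_top.ge
    (Fintype.card_fin _), fun i => by rw [coe_basisOfTopLeSpanOfCardEqFinrank]⟩

end CyclicBasis

section Companion

variable {R M : Type*} [Ring R] [AddCommGroup M] [Module R M]

theorem isIdempotentElem_smulRight {φ : M →ₗ[R] R} {x : M} (hx : φ x = 1) :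
    IsIdempotentElem (φ.smulRight x : End R M) :=
  LinearMap.ext fun z => by simp [hx]

theorem isIdempotentElem_smulRight_add_smulRight {φ ψ : M →ₗ[R] R} {x y : M} (hφx : φ x = 1)
    (hφy : φ y = 0) (hψx : ψ x = 0) (hψy : ψ y = 1) :
    IsIdempotentElem (φ.smulRight x + ψ.smulRight y : End R M) :=
  LinearMap.ext fun z => by simp [hφx, hφy, hψx, hψy]

theorem repr_pow_apply {n : ℕ} {f : End R M} {v : M} {b : Basis (Fin n) R M}
    (hb : ∀ i, b i = (f ^ (i : ℕ)) v) {i : ℕ} (hi : i < n) (j : Fin n) :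
    b.repr ((f ^ i) v) j = if i = j then 1 else 0 := by
  rw [← hb ⟨i, hi⟩, Basis.repr_self, Finsupp.single_apply]
  simp only [Fin.ext_iff]

-- `b.repr ((f ^ (m + 1)) v) (Fin.last m)` is the trace of `f`: it is the only diagonal entry of
-- the companion matrix of `f` in the basis `b` that can be nonzero.
theorem isNilClean_of_repr_pow_last_eq_one {m : ℕ} {f : End R M} {v : M}
    (b : Basis (Fin (m + 1)) R M) (hb : ∀ i, b i = (f ^ (i : ℕ)) v)
    (h : b.repr ((f ^ (m + 1)) v) (Fin.last m) = 1) : IsNilClean f := by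
  set E : End R M := (b.coord (Fin.last m)).smulRight ((f ^ (m + 1)) v)
  have hE : ∀ i < m + 1, E ((f ^ i) v) = if i = m then (f ^ (m + 1)) v else 0 := fun i hi => by
    simp [E, repr_pow_apply hb hi]
  have hN : ∀ i < m, (f - E) ((f ^ i) v) = (f ^ (i + 1)) v := fun i hi => by
    rw [LinearMap.sub_apply, hE i (by omega), if_neg hi.ne, sub_zero, ← mul_apply, ← pow_succ']
  have hNpow := pow_apply_eq_of_apply_pow_apply_eq hN
  have hNm : ((f - E) ^ (m + 1)) v = 0 := by
    rw [pow_succ', mul_apply, hNpow m le_rfl, LinearMap.sub_apply, hE m (by omega), if_pos rfl,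
      ← mul_apply, ← pow_succ', sub_self]
  have hcyc : (f - E).IsCyclicVector v := isCyclicVector_of_basis_mem_span b fun i =>
    Submodule.subset_span ⟨i, show ((f - E) ^ (i : ℕ)) v = b i by rw [hNpow i (by omega), hb]⟩
  exact ⟨E, f - E, isIdempotentElem_smulRight h, hcyc.isNilpotent hNm, (add_sub_cancel E f).symm⟩

theorem isNilpotent_sub_of_apply_pow_apply {m : ℕ} {f E : End R M} {v : M}
    (b : Basis (Fin (m + 3)) R M) (hb : ∀ i, b i = (f ^ (i : ℕ)) v) (a : R)
    (hE : ∀ i ≤ m, E ((f ^ i) v) = 0)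
    (hE₁ : E ((f ^ (m + 1)) v) = (f ^ (m + 1)) v + a • (f ^ m) v)
    (hE₂ : E ((f ^ (m + 2)) v) =
      (f ^ (m + 3)) v - (f ^ (m + 2)) v + (1 - a) • (f ^ (m + 1)) v + a • (f ^ m) v) :
    IsNilpotent (f - E) := by
  have hN : ∀ i < m + 1, (f - E) ((f ^ i) v) = (f ^ (i + 1)) v := fun i hi => by
    rw [LinearMap.sub_apply, hE i (by omega), sub_zero, ← mul_apply, ← pow_succ']
  have hNpow := pow_apply_eq_of_apply_pow_apply_eq hN
  have hNpow₂ : ((f - E) ^ (m + 2)) v = (f ^ (m + 2)) v - (f ^ (m + 1)) v - a • (f ^ m) v := by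
    rw [pow_succ', mul_apply, hNpow (m + 1) le_rfl, LinearMap.sub_apply, hE₁, ← mul_apply,
      ← pow_succ', sub_add_eq_sub_sub]
  have hNpow₃ : ((f - E) ^ (m + 3)) v = 0 := by
    rw [pow_succ', mul_apply, hNpow₂, map_sub, map_sub, map_smul, hN m (by omega)]
    simp only [LinearMap.sub_apply, hE₁, hE₂, ← mul_apply, ← pow_succ', sub_smul, one_smul]
    abel
  have hmem : ∀ k, ((f - E) ^ k) v ∈ Submodule.span R (Set.range fun k : ℕ => ((f - E) ^ k) v) :=
    fun k => Submodule.subset_span ⟨k, rfl⟩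
  refine (isCyclicVector_of_basis_mem_span b fun i => ?_).isNilpotent hNpow₃
  rw [hb]
  obtain hi | hi : (i : ℕ) ≤ m + 1 ∨ (i : ℕ) = m + 2 := by omega
  · exact hNpow i hi ▸ hmem i
  · have hlast : (f ^ (m + 2)) v =
        ((f - E) ^ (m + 2)) v + ((f - E) ^ (m + 1)) v + a • ((f - E) ^ m) v := by
      rw [hNpow₂, hNpow (m + 1) le_rfl, hNpow m (by omega)]
      abel
    rw [hi, hlast]
    exact add_mem (add_mem (hmem _) (hmem _)) (Submodule.smul_mem _ _ (hmem _))

/- `E` is the projection onto `span {x, y}` along `span {f ^ i v | i ≤ m}`; the coefficient `a`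
and the vector `y` are what makes `(f - E) ^ (m + 3)` kill `v`. -/
theorem isNilClean_of_repr_pow_last_eq_two {m : ℕ} {f : End R M} {v : M}
    (b : Basis (Fin (m + 3)) R M) (hb : ∀ i, b i = (f ^ (i : ℕ)) v)
    (h : b.repr ((f ^ (m + 3)) v) (Fin.last (m + 2)) = 2) : IsNilClean f := by
  set j : Fin (m + 3) := ⟨m + 1, by omega⟩
  set a := b.repr ((f ^ (m + 3)) v) j + 1
  set x := (f ^ (m + 1)) v + a • (f ^ m) v
  set y := (f ^ (m + 3)) v - (f ^ (m + 2)) v + (1 - a) • (f ^ (m + 1)) v + a • (f ^ m) v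
  set E : End R M := (b.coord j).smulRight x + (b.coord (Fin.last (m + 2))).smulRight y
  have hr := fun i (hi : i < m + 3) => repr_pow_apply hb hi
  have hE : ∀ i ≤ m, E ((f ^ i) v) = 0 := fun i hi => by
    have h₁ : i ≠ m + 1 := by omega
    have h₂ : i ≠ m + 2 := by omega
    simp [E, hr i (by omega), j, h₁, h₂]
  have hE₁ : E ((f ^ (m + 1)) v) = x := by simp [E, hr (m + 1) (by omega), j]
  have hE₂ : E ((f ^ (m + 2)) v) = y := by simp [E, hr (m + 2) (by omega), j]
  have hidem : IsIdempotentElem E := by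
    refine isIdempotentElem_smulRight_add_smulRight ?_ ?_ ?_ ?_
    · simp [x, hr (m + 1) (by omega), hr m (by omega), j]
    · simp [y, hr (m + 1) (by omega), hr m (by omega), hr (m + 2) (by omega), j, a]
    · simp [x, hr (m + 1) (by omega), hr m (by omega)]
    · simp [y, hr (m + 1) (by omega), hr m (by omega), hr (m + 2) (by omega), h,
        (by norm_num : (2 : R) - 1 = 1)]
  exact ⟨E, f - E, hidem, isNilpotent_sub_of_apply_pow_apply b hb a hE hE₁ hE₂,
    (add_sub_cancel E f).symm⟩

end Companion

section ZModTwo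

variable {V : Type*} [AddCommGroup V] [Module (ZMod 2) V]

theorem IsCyclicVector.isNilClean_of_basis_fin_two {f : End (ZMod 2) V} {v : V}
    (hv : f.IsCyclicVector v) (b : Basis (Fin 2) (ZMod 2) V)
    (hb : ∀ i, b i = (f ^ (i : ℕ)) v) (h : b.repr ((f ^ 2) v) 1 = 0) : IsNilClean f := by
  have hf2 : (f ^ 2) v = b.repr ((f ^ 2) v) 0 • v := by
    conv_lhs => rw [← b.sum_repr ((f ^ 2) v)]
    simp [Fin.sum_univ_two, h, hb]
  rcases (by decide : ∀ c : ZMod 2, c = 0 ∨ c = 1) (b.repr ((f ^ 2) v) 0) with hc | hc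
  · exact (hv.isNilpotent (k := 2) (by rw [hf2, hc, zero_smul])).isNilClean
  · have hcomm : Commute f ((f - 1) ^ 2) :=
      ((Commute.refl f).sub_right (Commute.one_right f)).pow_right 2
    refine ⟨1, f - 1, IsIdempotentElem.one, ⟨2, hv.eq_zero_of_commute hcomm ?_⟩,
      (add_sub_cancel 1 f).symm⟩
    rw [hc, one_smul, sq, mul_apply] at hf2
    simp only [sq, mul_apply, LinearMap.sub_apply, one_apply, map_sub, hf2]
    rw [ZModModule.sub_eq_add, ZModModule.sub_eq_add, ZModModule.sub_eq_add,
      ZModModule.add_add_add_cancel, ZModModule.add_self]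

theorem IsCyclicVector.isNilClean_zmod_two [FiniteDimensional (ZMod 2) V] {f : End (ZMod 2) V}
    {v : V} (hv : f.IsCyclicVector v) : IsNilClean f := by
  rcases hn : finrank (ZMod 2) V with _ | m
  · have := finrank_zero_iff.mp hn
    exact IsNilpotent.isNilClean ⟨1, Subsingleton.elim _ _⟩
  obtain ⟨b, hb⟩ := hv.exists_basis hn
  rcases (by decide : ∀ c : ZMod 2, c = 0 ∨ c = 1) (b.repr ((f ^ (m + 1)) v) (Fin.last m))
    with hc | hc
  · match m, b, hb, hc with
    | 0, b, hb, hc =>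
      refine (hv.isNilpotent (k := 1) ?_).isNilClean
      rw [← b.sum_repr ((f ^ 1) v), Fin.sum_univ_one]
      simp only [zero_add, Fin.last_zero] at hc
      rw [hc, zero_smul]
    | 1, b, hb, hc => exact hv.isNilClean_of_basis_fin_two b hb hc
    | m + 2, b, hb, hc => exact isNilClean_of_repr_pow_last_eq_two b hb (hc.trans (by decide))
  · exact isNilClean_of_repr_pow_last_eq_one b hb hc

theorem isNilClean_zmod_two [FiniteDimensional (ZMod 2) V] (f : End (ZMod 2) V) :
    IsNilClean f := by
  induction hn : finrank (ZMod 2) V using Nat.strong_induction_on generalizing V with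
  | _ n IH =>
  by_cases hf : ∀ W : Submodule (ZMod 2) V, W ≤ W.comap f → W = ⊥ ∨ W = ⊤
  · obtain ⟨v, hv⟩ := exists_isCyclicVector_of_invariant_eq_bot_or_top hf
    exact hv.isNilClean_zmod_two
  push Not at hf
  obtain ⟨W, hW, hW_bot, hW_top⟩ := hf
  have hW_pos : 0 < finrank (ZMod 2) W := Submodule.one_le_finrank_iff.2 hW_bot
  have hW_lt : finrank (ZMod 2) W < n := hn ▸ Submodule.finrank_lt hW_top
  have hQ_lt : finrank (ZMod 2) (V ⧸ W) < n := by
    have := W.finrank_quotient_add_finrank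
    omega
  exact isNilClean_of_isNilClean_restrict_of_isNilClean_mapQ hW (IH _ hW_lt _ rfl)
    (IH _ hQ_lt _ rfl)

end ZModTwo

end Module.End

theorem Matrix.isNilCleanRing_zmod_two (ι : Type*) [Fintype ι] [DecidableEq ι] :
    IsNilCleanRing (Matrix ι ι (ZMod 2)) :=
  IsNilCleanRing.of_surjective LinearMap.toMatrixAlgEquiv' (AlgEquiv.surjective _)
    Module.End.isNilClean_zmod_two

theorem Matrix.isIdempotentElem_of_isNilCleanRing {K ι : Type*} [CommRing K] [IsReduced K]
    [Fintype ι] [DecidableEq ι] [Nonempty ι] (h : IsNilCleanRing (Matrix ι ι K)) (a : K) :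
    IsIdempotentElem a := by
  have hnil := IsNilClean.isNilpotent_mul_self_sub (h (algebraMap K _ a)) (Algebra.commutes a)
  have hinj : Function.Injective (algebraMap K (Matrix ι ι K)) := fun r s hrs =>
    Matrix.scalar_inj.1 hrs
  rw [← map_mul, ← map_sub, IsNilpotent.map_iff hinj] at hnil
  exact sub_eq_zero.1 hnil.eq_zero

theorem nonempty_ringEquiv_zmod_two {K : Type*} [Ring K] [IsDomain K]
    (h : ∀ a : K, IsIdempotentElem a) : Nonempty (K ≃+* ZMod 2) := by
  have h01 : ∀ a : K, a = 0 ∨ a = 1 := fun a => IsIdempotentElem.iff_eq_zero_or_one.1 (h a)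
  have : CharP K 2 := by
    refine (CharP.charP_iff_prime_eq_zero Nat.prime_two).2 ?_
    refine (h01 _).resolve_right fun h2 => ?_
    rw [Nat.cast_ofNat, ← one_add_one_eq_two, add_eq_left] at h2
    exact one_ne_zero h2
  refine ⟨(RingEquiv.ofBijective (ZMod.castHom (dvd_refl 2) K)
    ⟨ZMod.castHom_injective K, ?_⟩).symm⟩
  intro a
  rcases h01 a with rfl | rfl
  exacts [⟨0, map_zero _⟩, ⟨1, map_one _⟩]

theorem nilClean_matrix_field_tfae (K : Type*) [Field K] :
    List.TFAE
      [Nonempty (K ≃+* ZMod 2),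
       ∀ n : ℕ, 0 < n → IsNilCleanRing (Matrix (Fin n) (Fin n) K),
       ∃ n : ℕ, 0 < n ∧ IsNilCleanRing (Matrix (Fin n) (Fin n) K)] := by
  tfae_have 1 → 2 := fun ⟨ψ⟩ n _ =>
    IsNilCleanRing.of_surjective ψ.symm.mapMatrix ψ.symm.mapMatrix.surjective
      (Matrix.isNilCleanRing_zmod_two (Fin n))
  tfae_have 2 → 3 := fun h => ⟨1, one_pos, h 1 one_pos⟩
  tfae_have 3 → 1 := fun ⟨n, hn, h⟩ =>
    have : Nonempty (Fin n) := ⟨⟨0, hn⟩⟩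
    nonempty_ringEquiv_zmod_two (Matrix.isIdempotentElem_of_isNilCleanRing h)
  tfae_finish
end

section
/- Let K be a field and n a positive integer. If the matrix ring Mₙ(K) is nil-clean, then K has exactly two elements (K ≅ 𝔽₂). -/
/-!
If `a = e + n` with `e` idempotent, `n` nilpotent and `a` commuting with `e`, then `e` and `n`
commute, so `a * a - a = n * (2 * e + n - 1)` is nilpotent. Applied to the scalar
matrices `c • 1`, nil-cleanness of `Mₙ(K)` makes every `c * c - c` nilpotent in `K`, hence zero;
a field all of whose elements are idempotent is `{0, 1}`, i.e. `𝔽₂`.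
-/

theorem isNilpotent_mul_self_sub_of_eq_add {R : Type*} [Ring R] {a e n : R}
    (ha : Commute a e) (he : IsIdempotentElem e) (hn : IsNilpotent n) (h : a = e + n) :
    IsNilpotent (a * a - a) := by
  have hen : Commute e n := by
    have : Commute e (a - e) := ha.symm.sub_right (Commute.refl e)
    rwa [h, add_sub_cancel_left] at this
  have key : a * a - a = n * (2 * e + n - 1) := by
    calc a * a - a = (e * e - e) + (e * n - n * e) + n * (2 * e + n - 1) := by rw [h]; noncomm_ring
      _ = n * (2 * e + n - 1) := by rw [he.eq, hen.eq, sub_self, sub_self, zero_add, zero_add]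
  have hcomm : Commute n (2 * e + n - 1) :=
    (((Commute.ofNat_left 2 n).symm.mul_right hen.symm).add_right (Commute.refl n)).sub_right
      (Commute.one_right n)
  rw [key]
  exact hcomm.isNilpotent_mul_right hn

theorem IsNilCleanRing.isIdempotentElem_of_algebraMap_injective {K R : Type*} [CommRing K]
    [IsReduced K] [Ring R] [Algebra K R] (hR : IsNilCleanRing R)
    (hinj : Function.Injective (algebraMap K R)) (c : K) : IsIdempotentElem c := by
  obtain ⟨e, n, he, hn, hc⟩ := hR (algebraMap K R c)
  have hnil : IsNilpotent (algebraMap K R (c * c - c)) := by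
    rw [map_sub, map_mul]
    exact isNilpotent_mul_self_sub_of_eq_add (Algebra.commutes c e) he hn hc
  exact sub_eq_zero.mp ((IsNilpotent.map_iff hinj).mp hnil).eq_zero

theorem nonempty_ringEquiv_zmod_two_of_forall_isIdempotentElem {K : Type*} [Ring K]
    [IsDomain K] (hK : ∀ c : K, IsIdempotentElem c) : Nonempty (K ≃+* ZMod 2) := by
  have two_eq_zero : (2 : K) = 0 :=
    (IsIdempotentElem.iff_eq_zero_or_one.mp (hK 2)).resolve_right
      fun h ↦ by simp [← one_add_one_eq_two] at h
  have : CharP K 2 := CharTwo.of_one_ne_zero_of_two_eq_zero one_ne_zero two_eq_zero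
  refine ⟨(RingEquiv.ofBijective (ZMod.castHom dvd_rfl K) ⟨ZMod.castHom_injective K, ?_⟩).symm⟩
  intro x
  rcases IsIdempotentElem.iff_eq_zero_or_one.mp (hK x) with rfl | rfl
  · exact ⟨0, map_zero _⟩
  · exact ⟨1, map_one _⟩

theorem field_of_matrix_nilClean (K : Type*) [Field K] (n : ℕ) (hn : 0 < n)
    (h : IsNilCleanRing (Matrix (Fin n) (Fin n) K)) :
    Nonempty (K ≃+* ZMod 2) := by
  have : Nonempty (Fin n) := ⟨⟨0, hn⟩⟩
  exact nonempty_ringEquiv_zmod_two_of_forall_isIdempotentElem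
    (h.isIdempotentElem_of_algebraMap_injective (FaithfulSMul.algebraMap_injective _ _))
end

section
/- Every companion matrix over the field 𝔽₂ (the n × n matrix with 1's on the subdiagonal, last column given by the coefficients of a monic polynomial, and 0's elsewhere) is nil-clean in Mₙ(𝔽₂), i.e., it is the sum of an idempotent matrix and a nilpotent matrix. -/
open Matrix

set_option linter.unusedSectionVars false
set_option linter.unusedVariables false

namespace CompanionF2

local notation "F" => ZMod 2

lemma Fsub : ∀ x y : ZMod 2, x - y = x + y := by decide
lemma Ftwo : ∀ x : ZMod 2, x + x = 0 := by decide
lemma Fneg : ∀ x : ZMod 2, -x = x := by decide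
lemma Fcases : ∀ x : ZMod 2, x = 0 ∨ x = 1 := by decide

section Defs

variable (n : ℕ) (c : ℕ → F)

/-- standard basis vector with ℕ index (zero if out of range). -/
def ev (m : ℕ) : Fin n → F := fun i => if (i : ℕ) = m then 1 else 0

/-- the subdiagonal shift matrix. -/
def Smat : Matrix (Fin n) (Fin n) F :=
  Matrix.of fun i j => if (i : ℕ) = (j : ℕ) + 1 then 1 else 0

/-- the last-column matrix with entries c. -/
def Pmat : Matrix (Fin n) (Fin n) F :=
  Matrix.of fun i j => if (j : ℕ) = n - 1 then c i else 0

/-- the companion matrix (signs are irrelevant in char 2). -/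
def Cmat : Matrix (Fin n) (Fin n) F :=
  Matrix.of fun i j => if (i : ℕ) = (j : ℕ) + 1 then 1
    else if (j : ℕ) = n - 1 then c i else 0

def cm1 : ℕ → F := fun i => if i = 0 then 0 else c (i - 1)

def u1 : ℕ → F := fun i =>
  if i = n - 2 then cm1 c (n - 2) + 1
  else if i = n - 1 then 0 else c i + cm1 c i

def u2 : ℕ → F := fun i =>
  if i = n - 1 then 1 else if i = n - 2 then 1 + c (n - 2) else 0

def wv : ℕ → F := fun i => c i + u2 n c i

def Emat (k : ℕ) : Matrix (Fin n) (Fin n) F :=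
  Matrix.of fun i j =>
    (if (j : ℕ) = k then u1 n c i else 0) + (if (j : ℕ) = n - 1 then u2 n c i else 0)

end Defs

section Lemmas

variable {n : ℕ} {c : ℕ → F}

lemma ev_of_ge {m : ℕ} (h : n ≤ m) : ev n m = 0 := by
  funext i
  simp only [ev, Pi.zero_apply, ite_eq_right_iff]
  intro hi; omega

lemma sum_ite_val {m : ℕ} (hm : m < n) (f : Fin n → F) :
    (∑ l : Fin n, if (l : ℕ) = m then f l else 0) = f ⟨m, hm⟩ := by
  have h : ∀ l : Fin n, ((l : ℕ) = m) = (l = ⟨m, hm⟩) := by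
    intro l; rw [Fin.ext_iff]
  simp only [h]
  simp

lemma mulVec_ev (M : Matrix (Fin n) (Fin n) F) {m : ℕ} (hm : m < n) :
    M *ᵥ ev n m = fun i => M i ⟨m, hm⟩ := by
  funext i
  simp only [mulVec, dotProduct, ev]
  rw [show (∑ j : Fin n, M i j * if (j : ℕ) = m then 1 else 0)
      = ∑ j : Fin n, if (j : ℕ) = m then M i j else 0 by
    apply Finset.sum_congr rfl; intro j _; split <;> simp]
  exact sum_ite_val hm _

lemma C_split : Cmat n c = Smat n + Pmat n c := by
  ext i j
  simp only [Cmat, Smat, Pmat, Matrix.of_apply, Matrix.add_apply]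
  have hi := i.isLt
  split_ifs with h1 h2 <;> simp <;> omega

/-- Case A nilpotency: the shift is nilpotent. -/
lemma Smat_pow_eq_zero (hn : 0 < n) : (Smat n) ^ n = 0 := by
  have step : ∀ m : ℕ, Smat n *ᵥ ev n m = ev n (m + 1) := by
    intro m
    by_cases hm : m < n
    · rw [mulVec_ev _ hm]
      funext i
      simp only [Smat, Matrix.of_apply, ev]
    · rw [ev_of_ge (by omega), mulVec_zero, ev_of_ge (by omega)]
  have pow_step : ∀ d m : ℕ, (Smat n) ^ d *ᵥ ev n m = ev n (m + d) := by
    intro d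
    induction d with
    | zero => intro m; simp [one_mulVec]
    | succ d ih =>
      intro m
      have hmd : m + (d + 1) = (m + 1) + d := by omega
      rw [hmd, pow_succ, ← Matrix.mulVec_mulVec, step, ih]
  ext i j
  have : ((Smat n) ^ n *ᵥ ev n (j : ℕ)) i = ((Smat n) ^ n) i j := by
    rw [mulVec_ev _ j.isLt]
  rw [Matrix.zero_apply, ← this, pow_step, ev_of_ge (by omega)]
  simp

lemma Pmat_idem (h : c (n - 1) = 1 ∨ ∀ i < n, c i = 0) :
    Pmat n c * Pmat n c = Pmat n c := by
  ext i j
  rw [Matrix.mul_apply]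
  simp only [Pmat, Matrix.of_apply]
  rw [show (∑ l : Fin n, (if (l : ℕ) = n - 1 then c i else 0) *
        (if (j : ℕ) = n - 1 then c l else 0))
      = ∑ l : Fin n, if (l : ℕ) = n - 1 then
          (c i * if (j : ℕ) = n - 1 then c l else 0) else 0 by
    apply Finset.sum_congr rfl; intro l _; split <;> simp]
  have hn : 0 < n := i.pos
  rw [sum_ite_val (by omega : n - 1 < n)]
  rcases h with h | h
  · simp only [h]
    split <;> simp
  · rw [h i i.isLt]
    split <;> simp [h (n-1) (by omega)]


lemma vec_decomp (v : Fin n → F) : v = ∑ i : Fin n, v i • ev n (i : ℕ) := by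
  funext j
  rw [Finset.sum_apply]
  simp only [Pi.smul_apply, ev, smul_eq_mul, mul_ite, mul_one, mul_zero]
  have he : ∀ i : Fin n, ((j : ℕ) = (i : ℕ)) = (i = j) := by
    intro i
    apply propext
    rw [Fin.ext_iff]
    exact eq_comm
  rw [show (∑ x : Fin n, if (j : ℕ) = (x : ℕ) then v x else 0)
      = ∑ x : Fin n, if x = j then v x else 0 from
    Finset.sum_congr rfl (fun x _ => if_congr (by rw [Fin.ext_iff]; exact eq_comm) rfl rfl),
    Finset.sum_ite_eq' Finset.univ j v]
  simp

end Lemmas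

section CaseB

variable {n : ℕ} {c : ℕ → F} {k : ℕ}
variable (hck : c k = 1) (hkmin : ∀ i, i < k → c i = 0)
variable (hcn : c (n - 1) = 0) (hkn : k < n - 1)

section Vals
include hck hkmin hcn hkn

lemma hn2 : 2 ≤ n := by omega

lemma cm1k : cm1 c k = 0 := by
  unfold cm1
  split
  · rfl
  · exact hkmin _ (by omega)

lemma u1k : u1 n c k = 1 := by
  unfold u1
  split_ifs with h1 h2
  · rw [← h1, cm1k hck hkmin hcn hkn]
    decide
  · omega
  · rw [hck, cm1k hck hkmin hcn hkn]; decide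

lemma u1top : u1 n c (n - 1) = 0 := by
  unfold u1
  split_ifs with h1 h2
  · omega
  · rfl
  · omega

lemma u2k : u2 n c k = 0 := by
  unfold u2
  split_ifs with h1 h2
  · omega
  · rw [← h2, hck]; decide
  · rfl

lemma u2top : u2 n c (n - 1) = 1 := by
  unfold u2; simp

lemma wk : wv n c k = 1 := by
  unfold wv
  rw [hck, u2k hck hkmin hcn hkn]; decide

lemma wtop : wv n c (n - 1) = 1 := by
  unfold wv
  rw [hcn, u2top hck hkmin hcn hkn]; decide

lemma wlow : ∀ i, i < k → wv n c i = 0 := by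
  intro i hi
  unfold wv u2
  rw [hkmin i hi]
  split_ifs with h1 h2
  · omega
  · omega
  · decide

lemma Emat_idem : Emat n c k * Emat n c k = Emat n c k := by
  ext i j
  rw [Matrix.mul_apply]
  simp only [Emat, Matrix.of_apply]
  have hkltn : k < n := by omega
  have hn1 : n - 1 < n := by omega
  rw [show (∑ l : Fin n, ((if (l:ℕ) = k then u1 n c i else 0) + (if (l:ℕ) = n-1 then u2 n c i else 0)) *
        ((if (j:ℕ) = k then u1 n c l else 0) + (if (j:ℕ) = n-1 then u2 n c l else 0)))
      = (∑ l : Fin n, if (l:ℕ) = k then (u1 n c i *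
          ((if (j:ℕ) = k then u1 n c l else 0) + (if (j:ℕ) = n-1 then u2 n c l else 0))) else 0)
        + (∑ l : Fin n, if (l:ℕ) = n-1 then (u2 n c i *
          ((if (j:ℕ) = k then u1 n c l else 0) + (if (j:ℕ) = n-1 then u2 n c l else 0))) else 0) by
    rw [← Finset.sum_add_distrib]
    apply Finset.sum_congr rfl; intro l _
    split_ifs with h1 h2 <;> try omega
    all_goals simp [add_mul]]
  rw [sum_ite_val hkltn, sum_ite_val hn1]
  simp only
  rw [u1k hck hkmin hcn hkn, u1top hck hkmin hcn hkn,
    u2k hck hkmin hcn hkn, u2top hck hkmin hcn hkn]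
  split_ifs with h1 h2 <;> ring

end Vals

end CaseB


lemma F2zero : (2 : ZMod 2) = 0 := by decide

section NilpB

variable {n : ℕ} {c : ℕ → F} {k : ℕ}

lemma sum_shift (g : Fin n → F) (i : Fin n) :
    (∑ j : Fin n, if (i : ℕ) = (j : ℕ) + 1 then g j else 0)
    = if h : 1 ≤ (i : ℕ) then g ⟨(i : ℕ) - 1, by omega⟩ else 0 := by
  have hi := i.isLt
  by_cases h : 1 ≤ (i : ℕ)
  · rw [dif_pos h]
    have he : ∀ j : Fin n, ((i : ℕ) = (j : ℕ) + 1) = ((j : ℕ) = (i : ℕ) - 1) := by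
      intro j
      have := j.isLt
      apply propext
      constructor <;> (intro; omega)
    simp only [he]
    exact sum_ite_val (by omega) g
  · rw [dif_neg h]
    apply Finset.sum_eq_zero
    intro j _
    rw [if_neg]
    omega

variable (hck : c k = 1) (hkmin : ∀ i, i < k → c i = 0)
variable (hcn : c (n - 1) = 0) (hkn : k < n - 1)

include hck hkmin hcn hkn

lemma col_other {m : ℕ} (hm : m < n - 1) (hmk : m ≠ k) :
    (Cmat n c - Emat n c k) *ᵥ ev n m = ev n (m + 1) := by
  rw [mulVec_ev _ (by omega : m < n)]
  funext i
  simp only [Matrix.sub_apply, Cmat, Emat, Matrix.of_apply, ev, Fin.val_mk]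
  rw [if_neg hmk, if_neg (by omega : ¬ m = n - 1), if_neg (by omega : ¬ m = n - 1)]
  simp

lemma col_top :
    (Cmat n c - Emat n c k) *ᵥ ev n (n - 1) = (fun i : Fin n => wv n c ↑i) := by
  rw [mulVec_ev _ (by omega : n - 1 < n)]
  funext i
  have hi := i.isLt
  simp only [Matrix.sub_apply, Cmat, Emat, Matrix.of_apply, Fin.val_mk]
  rw [if_neg (by omega : ¬ (i : ℕ) = (n - 1) + 1), if_neg (by omega : ¬ n - 1 = k)]
  simp only [if_true, eq_self_iff_true, zero_add]
  rw [Fsub]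
  rfl

lemma Emul_w :
    (Emat n c k) *ᵥ (fun i : Fin n => wv n c ↑i) = fun i : Fin n => u1 n c ↑i + u2 n c ↑i := by
  funext i
  simp only [Matrix.mulVec, dotProduct, Emat, Matrix.of_apply]
  rw [show (∑ l : Fin n, ((if (l : ℕ) = k then u1 n c i else 0) +
        (if (l : ℕ) = n - 1 then u2 n c i else 0)) * wv n c l)
      = (∑ l : Fin n, if (l : ℕ) = k then u1 n c i * wv n c l else 0)
        + (∑ l : Fin n, if (l : ℕ) = n - 1 then u2 n c i * wv n c l else 0) by
    rw [← Finset.sum_add_distrib]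
    apply Finset.sum_congr rfl
    intro l _
    split_ifs with h1 h2
    · omega
    · simp [add_mul]
    · simp [add_mul]
    · simp]
  rw [sum_ite_val (by omega : k < n), sum_ite_val (by omega : n - 1 < n)]
  simp only [Fin.val_mk]
  rw [wk hck hkmin hcn hkn, wtop hck hkmin hcn hkn, mul_one, mul_one]

lemma Pmul_w :
    (Pmat n c) *ᵥ (fun i : Fin n => wv n c ↑i) = (fun i : Fin n => c ↑i) := by
  funext i
  simp only [Matrix.mulVec, dotProduct, Pmat, Matrix.of_apply]
  rw [show (∑ l : Fin n, (if (l : ℕ) = n - 1 then c ↑i else 0) * wv n c l)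
      = ∑ l : Fin n, if (l : ℕ) = n - 1 then c ↑i * wv n c l else 0 by
    apply Finset.sum_congr rfl
    intro l _
    split <;> simp]
  rw [sum_ite_val (by omega : n - 1 < n)]
  simp only [Fin.val_mk]
  rw [wtop hck hkmin hcn hkn, mul_one]

lemma f_w : (Cmat n c - Emat n c k) *ᵥ (fun i : Fin n => wv n c ↑i) = 0 := by
  rw [Matrix.sub_mulVec, C_split, Matrix.add_mulVec, Emul_w hck hkmin hcn hkn,
    Pmul_w hck hkmin hcn hkn]
  funext i
  have hi := i.isLt
  have hn2 : 2 ≤ n := by omega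
  simp only [Pi.add_apply, Pi.sub_apply, Pi.zero_apply]
  have hS : (Smat n *ᵥ (fun i : Fin n => wv n c ↑i)) i
      = if h : 1 ≤ (i : ℕ) then wv n c ((i : ℕ) - 1) else 0 := by
    simp only [Matrix.mulVec, dotProduct, Smat, Matrix.of_apply, ite_mul, one_mul,
      zero_mul]
    rw [sum_shift (fun j : Fin n => wv n c ↑j) i]
  rw [hS, Fsub]
  rcases Nat.lt_or_ge (i : ℕ) 1 with h0 | h1
  · -- i = 0
    rw [dif_neg (by omega)]
    by_cases h2 : n = 2
    · simp only [u1, u2, cm1]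
      rw [if_pos (by omega : (i : ℕ) = n - 2), if_pos (by omega : n - 2 = 0),
        if_neg (by omega : ¬ (i : ℕ) = n - 1), if_pos (by omega : (i : ℕ) = n - 2),
        show (i : ℕ) = n - 2 by omega]
      linear_combination Ftwo (c (n - 2)) + Ftwo 1
    · simp only [u1, u2, cm1]
      rw [if_neg (by omega : ¬ (i : ℕ) = n - 2), if_neg (by omega : ¬ (i : ℕ) = n - 1),
        if_pos (by omega : (i : ℕ) = 0), if_neg (by omega : ¬ (i : ℕ) = n - 1),
        if_neg (by omega : ¬ (i : ℕ) = n - 2)]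
      linear_combination Ftwo (c (i : ℕ))
  · rw [dif_pos h1]
    by_cases hA : (i : ℕ) = n - 1
    · simp only [u1, u2, wv, cm1]
      rw [if_neg (by omega : ¬ (i : ℕ) - 1 = n - 1), if_pos (by omega : (i : ℕ) - 1 = n - 2),
        if_neg (by omega : ¬ (i : ℕ) = n - 2), if_pos (by omega : (i : ℕ) = n - 1),
        if_pos (by omega : (i : ℕ) = n - 1),
        show (i : ℕ) - 1 = n - 2 by omega, show (i : ℕ) = n - 1 by omega, hcn]
      linear_combination Ftwo (c (n - 2)) + Ftwo 1
    · by_cases hB : (i : ℕ) = n - 2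
      · have hn3 : 3 ≤ n := by omega
        simp only [u1, u2, wv, cm1]
        rw [if_neg (by omega : ¬ (i : ℕ) - 1 = n - 1),
          if_neg (by omega : ¬ (i : ℕ) - 1 = n - 2),
          if_pos (by omega : (i : ℕ) = n - 2), if_neg (by omega : ¬ n - 2 = 0),
          if_neg (by omega : ¬ (i : ℕ) = n - 1), if_pos (by omega : (i : ℕ) = n - 2),
          show n - 2 - 1 = (i : ℕ) - 1 by omega, show n - 2 = (i : ℕ) by omega]
        linear_combination Ftwo (c ((i : ℕ) - 1)) + Ftwo (c (i : ℕ)) + Ftwo 1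
      · simp only [u1, u2, wv, cm1]
        rw [if_neg (by omega : ¬ (i : ℕ) - 1 = n - 1),
          if_neg (by omega : ¬ (i : ℕ) - 1 = n - 2),
          if_neg (by omega : ¬ (i : ℕ) = n - 2), if_neg hA,
          if_neg (by omega : ¬ (i : ℕ) = 0), if_neg hA,
          if_neg (by omega : ¬ (i : ℕ) = n - 2)]
        linear_combination Ftwo (c ((i : ℕ) - 1)) + Ftwo (c (i : ℕ))

lemma chain_L1 : ∀ d m : ℕ, k < m → n + 1 ≤ d + m →
    ((Cmat n c - Emat n c k) ^ d) *ᵥ ev n m = 0 := by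
  intro d
  induction d with
  | zero =>
    intro m hkm hnm
    rw [pow_zero, one_mulVec, ev_of_ge (by omega)]
  | succ d ih =>
    intro m hkm hnm
    by_cases hm : m < n
    · rw [pow_succ, ← Matrix.mulVec_mulVec]
      by_cases htop : m = n - 1
      · subst htop
        rw [col_top hck hkmin hcn hkn]
        obtain ⟨d', rfl⟩ : ∃ d', d = d' + 1 := ⟨d - 1, by omega⟩
        rw [pow_succ, ← Matrix.mulVec_mulVec, f_w hck hkmin hcn hkn, mulVec_zero]
      · rw [col_other hck hkmin hcn hkn (by omega) (by omega),
          ih (m + 1) (by omega) (by omega)]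
    · rw [ev_of_ge (by omega), mulVec_zero]

lemma chain_w (d : ℕ) (hd : 1 ≤ d) :
    ((Cmat n c - Emat n c k) ^ d) *ᵥ (fun i : Fin n => wv n c ↑i) = 0 := by
  obtain ⟨d', rfl⟩ : ∃ d', d = d' + 1 := ⟨d - 1, by omega⟩
  rw [pow_succ, ← Matrix.mulVec_mulVec, f_w hck hkmin hcn hkn, mulVec_zero]

lemma chain_L2 : ((Cmat n c - Emat n c k) ^ (n - k)) *ᵥ ev n k = 0 := by
  have hrw : ev n k = (fun i : Fin n => wv n c ↑i)
      - ((fun i : Fin n => wv n c ↑i) - ev n k) := by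
    rw [sub_sub_cancel]
  rw [hrw, Matrix.mulVec_sub, chain_w hck hkmin hcn hkn (n - k) (by omega)]
  have hr : ((Cmat n c - Emat n c k) ^ (n - k)) *ᵥ
      ((fun i : Fin n => wv n c ↑i) - ev n k) = 0 := by
    set M := (Cmat n c - Emat n c k) ^ (n - k) with hM
    set r : Fin n → F := (fun i : Fin n => wv n c ↑i) - ev n k with hrdef
    have : M *ᵥ r = ∑ i : Fin n, r i • (M *ᵥ ev n (i : ℕ)) := by
      conv_lhs => rw [vec_decomp r]
      rw [show M *ᵥ (∑ i : Fin n, r i • ev n (i : ℕ))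
          = M.mulVecLin (∑ i : Fin n, r i • ev n (i : ℕ)) from rfl]
      rw [map_sum]
      apply Finset.sum_congr rfl
      intro i _
      rw [_root_.map_smul]
      rfl
    rw [this]
    apply Finset.sum_eq_zero
    intro i _
    by_cases hik : (i : ℕ) ≤ k
    · have hri : r i = 0 := by
        rw [hrdef]
        simp only [Pi.sub_apply, ev]
        by_cases hik' : (i : ℕ) = k
        · rw [if_pos hik', hik', wk hck hkmin hcn hkn, sub_self]
        · rw [if_neg hik', wlow hck hkmin hcn hkn _ (by omega), sub_zero]
      rw [hri, zero_smul]
    · rw [chain_L1 hck hkmin hcn hkn (n - k) (i : ℕ) (by omega)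
        (by have := i.isLt; omega), smul_zero]
  rw [hr, sub_zero]

lemma chain_L3 : ∀ d j : ℕ, j + d = k → ((Cmat n c - Emat n c k) ^ d) *ᵥ ev n j = ev n k := by
  intro d
  induction d with
  | zero =>
    intro j hj
    rw [pow_zero, one_mulVec, show j = k by omega]
  | succ d ih =>
    intro j hj
    rw [pow_succ, ← Matrix.mulVec_mulVec,
      col_other hck hkmin hcn hkn (by omega) (by omega), ih (j + 1) (by omega)]

lemma Npow_eq_zero : (Cmat n c - Emat n c k) ^ n = 0 := by
  ext i j
  rw [Matrix.zero_apply]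
  have hcol : (((Cmat n c - Emat n c k) ^ n) *ᵥ ev n (j : ℕ)) i
      = ((Cmat n c - Emat n c k) ^ n) i j := by
    rw [mulVec_ev _ j.isLt]
  rw [← hcol]
  by_cases hjk : (j : ℕ) ≤ k
  · have hpow : (Cmat n c - Emat n c k) ^ n
        = ((Cmat n c - Emat n c k) ^ ((j : ℕ))) *
          (((Cmat n c - Emat n c k) ^ (n - k)) *
            ((Cmat n c - Emat n c k) ^ (k - (j : ℕ)))) := by
      rw [← pow_add, ← pow_add]
      congr 1
      omega
    rw [hpow, ← Matrix.mulVec_mulVec, ← Matrix.mulVec_mulVec,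
      chain_L3 hck hkmin hcn hkn (k - (j : ℕ)) (j : ℕ) (by omega),
      chain_L2 hck hkmin hcn hkn, mulVec_zero]
    rfl
  · rw [chain_L1 hck hkmin hcn hkn n (j : ℕ) (by omega) (by omega)]
    rfl


end NilpB


end CompanionF2

theorem companionMatrix_F2_nilClean (n : ℕ) (hn : 0 < n) (p : Polynomial (ZMod 2))
    (hp : p.Monic) (hdeg : p.natDegree = n) :
    ∃ E N : Matrix (Fin n) (Fin n) (ZMod 2),
      IsIdempotentElem E ∧ IsNilpotent N ∧
        (Matrix.of fun i j : Fin n =>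
          if (i : ℕ) = (j : ℕ) + 1 then 1
          else if (j : ℕ) = n - 1 then -p.coeff i else 0) = E + N := by
  classical
  set c : ℕ → ZMod 2 := fun m => p.coeff m with hc
  have hC : (Matrix.of fun i j : Fin n =>
        if (i : ℕ) = (j : ℕ) + 1 then (1 : ZMod 2)
        else if (j : ℕ) = n - 1 then -p.coeff i else 0) = CompanionF2.Cmat n c := by
    ext i j
    simp only [Matrix.of_apply, CompanionF2.Cmat]
    split_ifs with h1 h2
    · rfl
    · rw [CompanionF2.Fneg]
    · rfl
  rw [hC]
  by_cases hA : p.coeff (n - 1) = 1 ∨ ∀ i < n, c i = 0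
  · have hA' : c (n - 1) = 1 ∨ ∀ i < n, c i = 0 := hA
    exact ⟨CompanionF2.Pmat n c, CompanionF2.Smat n,
      CompanionF2.Pmat_idem hA',
      ⟨n, CompanionF2.Smat_pow_eq_zero hn⟩,
      by rw [CompanionF2.C_split, add_comm]⟩
  · push_neg at hA
    obtain ⟨h1, i0, hi0n, hi0⟩ := hA
    have h1' : c (n - 1) ≠ 1 := h1
    have hcn : c (n - 1) = 0 := by
      rcases CompanionF2.Fcases (c (n - 1)) with h | h
      · exact h
      · exact absurd h h1'
    have hex : ∃ m, c m ≠ 0 := ⟨i0, hi0⟩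
    have hck : c (Nat.find hex) ≠ 0 := Nat.find_spec hex
    have hck1 : c (Nat.find hex) = 1 := by
      rcases CompanionF2.Fcases (c (Nat.find hex)) with h | h
      · exact absurd h hck
      · exact h
    have hkmin : ∀ i, i < Nat.find hex → c i = 0 := fun i hi =>
      not_not.mp (Nat.find_min hex hi)
    have hkle : Nat.find hex ≤ i0 := Nat.find_min' hex hi0
    have hne : Nat.find hex ≠ n - 1 := by
      intro h
      rw [h, hcn] at hck
      exact hck rfl
    have hkn : Nat.find hex < n - 1 := by omega
    exact ⟨CompanionF2.Emat n c (Nat.find hex),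
      CompanionF2.Cmat n c - CompanionF2.Emat n c (Nat.find hex),
      CompanionF2.Emat_idem hck1 hkmin hcn hkn,
      ⟨n, CompanionF2.Npow_eq_zero hck1 hkmin hcn hkn⟩,
      by abel⟩
end

section
/- If R is a nil-clean ring, then the element 2 = 1 + 1 is nilpotent in R, and consequently 2 lies in the Jacobson radical J(R). -/
theorem isNilpotent_two_of_neg_one_eq_add {R : Type*} [Ring R] {e n : R}
    (he : IsIdempotentElem e) (hn : IsNilpotent n) (h : -1 = e + n) : IsNilpotent (2 : R) := by
  have he' : e = -(1 + n) := by rw [eq_neg_iff_add_eq_zero, add_left_comm, ← h, add_neg_cancel]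
  have hprod : (1 + n) * (2 + n) = 0 := by
    have hidem : (1 + n) * (1 + n) = -(1 + n) := by
      simpa only [he', neg_mul_neg] using he.eq
    calc (1 + n) * (2 + n) = (1 + n) * (1 + n) + (1 + n) := by noncomm_ring
      _ = 0 := by rw [hidem, neg_add_cancel]
  have h2 : (2 : R) = -n := eq_neg_of_add_eq_zero_left (hn.isUnit_one_add.mul_right_eq_zero.mp hprod)
  exact h2 ▸ hn.neg

theorem Ideal.mem_jacobson_bot_of_isNilpotent_of_commute {R : Type*} [Ring R] {x : R}
    (hcomm : ∀ y, Commute y x) (hx : IsNilpotent x) : x ∈ jacobson (⊥ : Ideal R) := by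
  refine mem_jacobson_iff.mpr fun y => ?_
  obtain ⟨u, hu⟩ := ((hcomm y).isNilpotent_mul_left hx).isUnit_add_one
  refine ⟨↑u⁻¹, ?_⟩
  rw [mem_bot, sub_eq_zero, mul_assoc, ← mul_add_one, ← hu, Units.inv_mul]

theorem two_nilpotent_of_nilClean (R : Type*) [Ring R] (h : IsNilCleanRing R) :
    IsNilpotent (2 : R) ∧ (2 : R) ∈ Ideal.jacobson (⊥ : Ideal R) := by
  obtain ⟨e, n, he, hn, hsum⟩ := h (-1)
  have h2 : IsNilpotent (2 : R) := isNilpotent_two_of_neg_one_eq_add he hn hsum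
  exact ⟨h2, Ideal.mem_jacobson_bot_of_isNilpotent_of_commute (fun y => Commute.ofNat_right y 2) h2⟩
end

section
/- Let I be a nil (two-sided) ideal of a ring R. Then R is nil-clean if and only if the quotient ring R/I is nil-clean. -/
/-!
Nil-clean decompositions are carried along any surjective ring homomorphism. Conversely, along a
surjection `f` with nil kernel, idempotents lift, and an element is nilpotent as soon as its image
is; so writing `f a = f e + n` with `e` an idempotent lift gives `a = e + (a - e)` with `a - e`
nilpotent.
-/

section

variable {R S : Type*} [Ring R] [Ring S] (f : R →+* S)

theorem IsNilpotent.of_map_of_ker_isNilpotent (h : ∀ x ∈ RingHom.ker f, IsNilpotent x) {x : R}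
    (hx : IsNilpotent (f x)) : IsNilpotent x := by
  obtain ⟨k, hk⟩ := hx
  exact (h (x ^ k) (by rw [RingHom.mem_ker, map_pow, hk])).of_pow

theorem IsNilCleanRing.of_surjective_s6 (hf : Function.Surjective f) (hR : IsNilCleanRing R) :
    IsNilCleanRing S := by
  intro a
  obtain ⟨b, rfl⟩ := hf a
  obtain ⟨e, n, he, hn, rfl⟩ := hR b
  exact ⟨f e, f n, he.map f, hn.map f, map_add f e n⟩

theorem IsNilCleanRing.of_surjective_of_ker_isNilpotent (hf : Function.Surjective f)
    (h : ∀ x ∈ RingHom.ker f, IsNilpotent x) (hS : IsNilCleanRing S) : IsNilCleanRing R := by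
  intro a
  obtain ⟨e', n', he', hn', ha⟩ := hS (f a)
  obtain ⟨e, he, rfl⟩ := exists_isIdempotentElem_eq_of_ker_isNilpotent f h e' (hf e') he'
  have hfae : f (a - e) = n' := by rw [map_sub, ha, add_sub_cancel_left]
  exact ⟨e, a - e, he, .of_map_of_ker_isNilpotent f h (hfae ▸ hn'), (add_sub_cancel e a).symm⟩

theorem isNilCleanRing_iff_of_surjective_of_ker_isNilpotent (hf : Function.Surjective f)
    (h : ∀ x ∈ RingHom.ker f, IsNilpotent x) : IsNilCleanRing R ↔ IsNilCleanRing S :=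
  ⟨.of_surjective f hf, .of_surjective_of_ker_isNilpotent f hf h⟩

end

theorem nilClean_iff_quotient_nil_ideal (R : Type*) [Ring R] (I : TwoSidedIdeal R)
    (hI : ∀ x ∈ I, IsNilpotent x) :
    IsNilCleanRing R ↔ IsNilCleanRing I.ringCon.Quotient := by
  refine isNilCleanRing_iff_of_surjective_of_ker_isNilpotent I.ringCon.mk'
    I.ringCon.mk'_surjective fun x hx ↦ hI x ?_
  rw [← TwoSidedIdeal.ker_ringCon_mk' I, TwoSidedIdeal.mem_ker]
  exact RingHom.mem_ker.1 hx
end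

section
/- If G is an abelian group whose endomorphism ring End(G) is nil-clean, then there exists a positive integer k such that 2ᵏ·g = 0 for all g ∈ G; in particular G is a bounded abelian 2-group. -/
theorem IsIdempotentElem.one_add_mul_two_sub {R : Type*} [Ring R] {e : R}
    (he : IsIdempotentElem e) : (1 + e) * (2 - e) = 2 := by
  rw [add_mul, mul_sub, mul_sub, he.eq, one_mul, one_mul, mul_two]
  abel

theorem IsNilCleanRing.isNilpotent_two {R : Type*} [Ring R] (h : IsNilCleanRing R) :
    IsNilpotent (2 : R) := by
  obtain ⟨e, n, he, hn, hsum⟩ := h (-1)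
  have hx : IsNilpotent (1 + e) := by
    rw [show 1 + e = -n by rw [eq_neg_iff_add_eq_zero, add_assoc, ← hsum, add_neg_cancel]]
    exact hn.neg
  have h3 : (2 : R) - e = 3 - (1 + e) := by
    rw [sub_add_eq_sub_sub, ← two_add_one_eq_three, add_sub_cancel_right]
  rw [← he.one_add_mul_two_sub, h3]
  exact ((Commute.ofNat_right _ 3).sub_right (Commute.refl _)).isNilpotent_mul_right hx

theorem AddMonoid.End.exists_pos_pow_nsmul_eq_zero {G : Type*} [AddCommMonoid G] {m : ℕ}
    (hm : IsNilpotent (m : AddMonoid.End G)) : ∃ k : ℕ, 0 < k ∧ ∀ g : G, (m ^ k : ℕ) • g = 0 := by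
  obtain ⟨k, hk⟩ := hm
  refine ⟨k + 1, k.succ_pos, fun g => ?_⟩
  rw [← AddMonoid.End.natCast_apply, Nat.cast_pow, pow_succ, hk, zero_mul]
  rfl

theorem bounded_two_group_of_nilClean_end (G : Type*) [AddCommGroup G]
    (h : IsNilCleanRing (AddMonoid.End G)) :
    ∃ k : ℕ, 0 < k ∧ ∀ g : G, (2 ^ k : ℕ) • g = 0 :=
  AddMonoid.End.exists_pos_pow_nsmul_eq_zero (mod_cast h.isNilpotent_two)
end
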